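/- arXiv:2312.03491 — 3 statements merged into one kernel-verified Lean document; each statement's English description precedes it below -/
import Mathlib

section
/- (Proposition 1, backward Kolmogorov component, one-dimensional case.) For any constants b ∈ ℝ and σ > 0, the function Ψ(t,x) = (σ² + σ̄_t²)^{−1/2} · exp( −(x − ᾱ_t b)² / (2·α_t²·(σ² + σ̄_t²)) ) satisfies, for every t ∈ (0,1) and every x ∈ ℝ, the backward Kolmogorov equation ∂Ψ/∂t (t,x) = −f(t)·x·∂Ψ/∂x (t,x) − (1/2)·g(t)²·∂²Ψ/∂x² (t,x). (This verifies that Ψ_t^ε, defined up to a time-independent constant as the Gaussian N(ᾱ_t b, α_t²(σ² + σ̄_t²)), solves the first PDE of the Schrödinger-bridge system with linear drift f(t)x.) -/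
/-- Scaling coefficient `α_t = exp(∫_0^t f)`. -/
noncomputable def alpha (f : ℝ → ℝ) (t : ℝ) : ℝ := Real.exp (∫ τ in (0:ℝ)..t, f τ)

/-- Reverse scaling coefficient `ᾱ_t = exp(-∫_t^1 f)`. -/
noncomputable def alphaBar (f : ℝ → ℝ) (t : ℝ) : ℝ := Real.exp (-∫ τ in t..(1:ℝ), f τ)

/-- Reverse accumulated variance `σ̄_t² = ∫_t^1 g²/α²`. -/
noncomputable def sigmaBarSq (f g : ℝ → ℝ) (t : ℝ) : ℝ :=
  ∫ τ in t..(1:ℝ), (g τ)^2 / (alpha f τ)^2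

/-!
The time derivative of `k(t) exp(-(x - μ(t))² / w(t))` is a quadratic polynomial in `x`
times the same exponential, and so are its first and second space derivatives. The backward
Kolmogorov equation with drift `c x` and diffusion `d` therefore reduces to matching three
coefficients, which holds when the mean is transported by the drift (`μ' = c μ`), the
width obeys `w' = 2 c w - 2 d`, and the amplitude `k'/k = d/w` compensates the spreading.
For `μ = ᾱ b`, `w = 2 α² (σ² + σ̄²)` and `k = (σ² + σ̄²)^{-1/2}` these three rates follow from
`α' = f α`, `ᾱ' = f ᾱ` and `(σ̄²)' = -g²/α²`.
-/

open Set Real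

section IntervalPrimitive

variable {f : ℝ → ℝ} {a b t : ℝ}

theorem hasDerivAt_integral_right_of_continuousOn (hf : ContinuousOn f (Icc a b))
    (ht : t ∈ Ioo a b) : HasDerivAt (fun s => ∫ τ in a..s, f τ) (f t) t :=
  intervalIntegral.integral_hasDerivAt_right
    ((hf.mono (Icc_subset_Icc le_rfl ht.2.le)).intervalIntegrable_of_Icc ht.1.le)
    ((hf.mono Ioo_subset_Icc_self).stronglyMeasurableAtFilter isOpen_Ioo t ht)
    (hf.continuousAt (Icc_mem_nhds ht.1 ht.2))

theorem hasDerivAt_integral_left_of_continuousOn (hf : ContinuousOn f (Icc a b))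
    (ht : t ∈ Ioo a b) : HasDerivAt (fun s => ∫ τ in s..b, f τ) (-f t) t :=
  intervalIntegral.integral_hasDerivAt_left
    ((hf.mono (Icc_subset_Icc ht.1.le le_rfl)).intervalIntegrable_of_Icc ht.2.le)
    ((hf.mono Ioo_subset_Icc_self).stronglyMeasurableAtFilter isOpen_Ioo t ht)
    (hf.continuousAt (Icc_mem_nhds ht.1 ht.2))

end IntervalPrimitive

section Schedule

variable {f g : ℝ → ℝ} {t : ℝ}

theorem alpha_pos (f : ℝ → ℝ) (t : ℝ) : 0 < alpha f t := exp_pos _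

theorem continuousOn_alpha (hf : ContinuousOn f (Icc 0 1)) : ContinuousOn (alpha f) (Icc 0 1) := by
  have hprim := intervalIntegral.continuousOn_primitive_interval (μ := MeasureTheory.volume)
    (hf.integrableOn_Icc (a := 0) (b := 1) |>.mono_set (uIcc_of_le zero_le_one).subset)
  rw [uIcc_of_le zero_le_one] at hprim
  exact continuous_exp.comp_continuousOn hprim

theorem hasDerivAt_alpha (hf : ContinuousOn f (Icc 0 1)) (ht : t ∈ Ioo 0 1) :
    HasDerivAt (alpha f) (alpha f t * f t) t :=
  (hasDerivAt_integral_right_of_continuousOn hf ht).exp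

theorem hasDerivAt_alphaBar (hf : ContinuousOn f (Icc 0 1)) (ht : t ∈ Ioo 0 1) :
    HasDerivAt (alphaBar f) (alphaBar f t * f t) t :=
  (hasDerivAt_integral_left_of_continuousOn hf ht).fun_neg.exp.congr_deriv (by rw [neg_neg]; rfl)

theorem hasDerivAt_sigmaBarSq (hf : ContinuousOn f (Icc 0 1)) (hg : ContinuousOn g (Icc 0 1))
    (ht : t ∈ Ioo 0 1) : HasDerivAt (sigmaBarSq f g) (-(g t ^ 2 / alpha f t ^ 2)) t :=
  hasDerivAt_integral_left_of_continuousOn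
    ((hg.pow 2).div ((continuousOn_alpha hf).pow 2)
      fun τ _ => pow_ne_zero 2 (alpha_pos f τ).ne') ht

theorem sigmaBarSq_nonneg (f g : ℝ → ℝ) (ht : t ≤ 1) : 0 ≤ sigmaBarSq f g t :=
  intervalIntegral.integral_nonneg ht fun _ _ => by positivity

end Schedule

section GaussianProfile

theorem hasDerivAt_gaussian_space (k μ w y : ℝ) :
    HasDerivAt (fun y => k * exp (-(y - μ) ^ 2 / w))
      (-(2 * (y - μ) / w) * (k * exp (-(y - μ) ^ 2 / w))) y := by
  have hexp := ((((hasDerivAt_id y).sub_const μ).fun_pow 2).fun_neg.div_const w).exp.const_mul k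
  refine hexp.congr_deriv ?_
  norm_num
  ring

theorem deriv_gaussian_space (k μ w : ℝ) :
    deriv (fun y => k * exp (-(y - μ) ^ 2 / w)) =
      fun y => -(2 * (y - μ) / w) * (k * exp (-(y - μ) ^ 2 / w)) :=
  funext fun y => (hasDerivAt_gaussian_space k μ w y).deriv

theorem deriv_deriv_gaussian_space (k μ w y : ℝ) :
    deriv (deriv (fun y => k * exp (-(y - μ) ^ 2 / w))) y =
      (4 * (y - μ) ^ 2 / w ^ 2 - 2 / w) * (k * exp (-(y - μ) ^ 2 / w)) := by
  rw [deriv_gaussian_space]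
  have hslope : HasDerivAt (fun y => -(2 * (y - μ) / w)) (-(2 / w)) y := by
    simpa using ((((hasDerivAt_id y).sub_const μ).const_mul 2).div_const w).fun_neg
  rw [(hslope.fun_mul (hasDerivAt_gaussian_space k μ w y)).deriv]
  ring

theorem hasDerivAt_gaussian_time {k μ w : ℝ → ℝ} {k' μ' w' x t : ℝ}
    (hk : HasDerivAt k k' t) (hμ : HasDerivAt μ μ' t) (hw : HasDerivAt w w' t) (hw0 : w t ≠ 0) :
    HasDerivAt (fun s => k s * exp (-(x - μ s) ^ 2 / w s))
      ((k' + k t * (2 * (x - μ t) * μ' / w t + (x - μ t) ^ 2 * w' / w t ^ 2)) *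
        exp (-(x - μ t) ^ 2 / w t)) t := by
  have hexp :=
    hk.fun_mul ((((hasDerivAt_const t x).fun_sub hμ).fun_pow 2).fun_neg.fun_div hw hw0).exp
  refine hexp.congr_deriv ?_
  norm_num
  field_simp

theorem gaussian_backward_kolmogorov {k μ w : ℝ → ℝ} {c d t : ℝ}
    (hk : HasDerivAt k (k t * d / w t) t) (hμ : HasDerivAt μ (μ t * c) t)
    (hw : HasDerivAt w (2 * c * w t - 2 * d) t) (hw0 : w t ≠ 0) (x : ℝ) :
    deriv (fun s => k s * exp (-(x - μ s) ^ 2 / w s)) t =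
      -c * x * deriv (fun y => k t * exp (-(y - μ t) ^ 2 / w t)) x
        - (1 / 2) * d * deriv (deriv (fun y => k t * exp (-(y - μ t) ^ 2 / w t))) x := by
  rw [(hasDerivAt_gaussian_time hk hμ hw hw0).deriv, deriv_deriv_gaussian_space,
    deriv_gaussian_space]
  field_simp
  ring

end GaussianProfile

section SchedulePDE

variable {a V : ℝ → ℝ} {c d t : ℝ}

theorem hasDerivAt_inv_sqrt_variance (hV : HasDerivAt V (-(d / a t ^ 2)) t) (hV0 : 0 < V t)
    (ha0 : a t ≠ 0) :
    HasDerivAt (fun s => (√(V s))⁻¹) ((√(V t))⁻¹ * d / (2 * a t ^ 2 * V t)) t := by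
  have hsqrt : √(V t) ≠ 0 := (sqrt_pos.mpr hV0).ne'
  refine ((hV.sqrt hV0.ne').fun_inv hsqrt).congr_deriv ?_
  rw [sq_sqrt hV0.le]
  field_simp

theorem hasDerivAt_gaussian_width (ha : HasDerivAt a (a t * c) t)
    (hV : HasDerivAt V (-(d / a t ^ 2)) t) (ha0 : a t ≠ 0) :
    HasDerivAt (fun s => 2 * a s ^ 2 * V s) (2 * c * (2 * a t ^ 2 * V t) - 2 * d) t := by
  refine (((ha.fun_pow 2).const_mul 2).fun_mul hV).congr_deriv ?_
  norm_num
  field_simp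
  ring

end SchedulePDE

theorem tractable_sb_backward_kolmogorov_general
    (f g : ℝ → ℝ)
    (hf : ContinuousOn f (Set.Icc 0 1)) (hg : ContinuousOn g (Set.Icc 0 1))
    (b σ : ℝ) (hσ : 0 < σ)
    (Ψ : ℝ → ℝ → ℝ)
    (hΨ : ∀ t x, Ψ t x =
      (Real.sqrt (σ^2 + sigmaBarSq f g t))⁻¹ *
        Real.exp (-(x - alphaBar f t * b)^2 /
          (2 * (alpha f t)^2 * (σ^2 + sigmaBarSq f g t)))) :
    ∀ t ∈ Set.Ioo (0:ℝ) 1, ∀ x : ℝ,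
      deriv (fun s => Ψ s x) t =
        - f t * x * deriv (fun y => Ψ t y) x
          - (1/2) * (g t)^2 * deriv (deriv (fun y => Ψ t y)) x := by
  intro t ht x
  obtain rfl : Ψ = _ := funext₂ hΨ
  have hV0 : 0 < σ ^ 2 + sigmaBarSq f g t := by
    have := sigmaBarSq_nonneg f g ht.2.le
    positivity
  have ha0 : alpha f t ≠ 0 := (alpha_pos f t).ne'
  have hV := (hasDerivAt_sigmaBarSq hf hg ht).const_add (σ ^ 2)
  have hmean : HasDerivAt (fun s => alphaBar f s * b) (alphaBar f t * b * f t) t :=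
    ((hasDerivAt_alphaBar hf ht).mul_const b).congr_deriv (by ring)
  exact gaussian_backward_kolmogorov (hasDerivAt_inv_sqrt_variance hV hV0 ha0) hmean
    (hasDerivAt_gaussian_width (hasDerivAt_alpha hf ht) hV ha0) (by positivity) x

/-- Proposition 1, backward Kolmogorov component (1-dimensional case):
`Ψ(t,x) = (σ² + σ̄_t²)^{-1/2} exp(-(x - ᾱ_t b)²/(2 α_t² (σ² + σ̄_t²)))` satisfies
`∂Ψ/∂t = -f(t) x ∂Ψ/∂x - (1/2) g(t)² ∂²Ψ/∂x²` on `(0,1) × ℝ`. -/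
theorem tractable_sb_backward_kolmogorov
    (f g : ℝ → ℝ)
    (hf : ContinuousOn f (Set.Icc 0 1)) (hg : ContinuousOn g (Set.Icc 0 1))
    (hgpos : ∀ t ∈ Set.Icc (0:ℝ) 1, 0 < g t)
    (b σ : ℝ) (hσ : 0 < σ)
    (Ψ : ℝ → ℝ → ℝ)
    (hΨ : ∀ t x, Ψ t x =
      (Real.sqrt (σ^2 + sigmaBarSq f g t))⁻¹ *
        Real.exp (-(x - alphaBar f t * b)^2 /
          (2 * (alpha f t)^2 * (σ^2 + sigmaBarSq f g t)))) :
    ∀ t ∈ Set.Ioo (0:ℝ) 1, ∀ x : ℝ,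
      deriv (fun s => Ψ s x) t =
        - f t * x * deriv (fun y => Ψ t y) x
          - (1/2) * (g t)^2 * deriv (deriv (fun y => Ψ t y)) x :=
  tractable_sb_backward_kolmogorov_general f g hf hg b σ hσ Ψ hΨ
end

section
/- (Proposition 1, boundary-condition system.) Let σ_1 > 0, α_1 > 0, ε > 0 and x_0, x_1 ∈ ℝ^d. Define σ² = ε² + (√(σ_1⁴ + 4ε⁴) − σ_1²)/2, a = x_0 + (σ²/σ_1²)(x_0 − x_1/α_1), and b = x_1 + (σ²/σ_1²)(x_1 − α_1 x_0). Then σ² > 0 and the following three identities hold: (i) σ²(σ² + σ_1²)/(2σ² + σ_1²) = ε²; (ii) ((σ² + σ_1²)·a + σ²·b/α_1)/(2σ² + σ_1²) = x_0; (iii) (α_1 σ²·a + (σ² + σ_1²)·b)/(2σ² + σ_1²) = x_1. That is, (a, b, σ²) solves the system of boundary conditions Ψ̂_0 Ψ_0 = N(x_0, ε² I), Ψ̂_1 Ψ_1 = N(x_1, α_1² ε² I) for the tractable Schrödinger bridge between Gaussian-smoothed paired data. -/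
/-!
With `c = σ₁²` and `e = ε²`, the prescribed `σ²` is the positive root of
`s² + (c - 2e) s - e c = 0`, which is identity (i) cleared of its denominator.
Identities (ii) and (iii) say that the matrix `[[s + c, s/α₁], [α₁ s, s + c]] / (2s + c)`
sends `(a, b)` to `(x₀, x₁)`; the formulas for `a` and `b` are its inverse applied to
`(x₀, x₁)`, and checking this is a computation in an arbitrary vector space.
-/

open Real

lemma mul_add_eq_of_eq_add_sqrt (c e s : ℝ) (hs : s = e + (√(c ^ 2 + 4 * e ^ 2) - c) / 2) :
    s * (s + c) = e * (2 * s + c) := by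
  have hsqrt : √(c ^ 2 + 4 * e ^ 2) ^ 2 = c ^ 2 + 4 * e ^ 2 := sq_sqrt (by positivity)
  subst hs
  linear_combination hsqrt / 4

lemma pos_of_eq_add_sqrt {c e s : ℝ} (he : 0 < e) (hs : s = e + (√(c ^ 2 + 4 * e ^ 2) - c) / 2) :
    0 < s := by
  have hc : c ≤ √(c ^ 2 + 4 * e ^ 2) :=
    (le_abs_self c).trans (sqrt_sq_eq_abs c ▸ sqrt_le_sqrt (le_add_of_nonneg_right (by positivity)))
  rw [hs]
  linarith

section BoundarySystem

variable {K V : Type*} [Field K] [AddCommGroup V] [Module K V]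
  {s c α : K} {x₀ x₁ : V}

lemma boundary_smul_add_eq_left (hc : c ≠ 0) (hα : α ≠ 0) :
    (s + c) • (x₀ + (s / c) • (x₀ - α⁻¹ • x₁)) + (s * α⁻¹) • (x₁ + (s / c) • (x₁ - α • x₀))
      = (2 * s + c) • x₀ := by
  match_scalars <;> field_simp <;> ring

lemma boundary_smul_add_eq_right (hc : c ≠ 0) (hα : α ≠ 0) :
    (α * s) • (x₀ + (s / c) • (x₀ - α⁻¹ • x₁)) + (s + c) • (x₁ + (s / c) • (x₁ - α • x₀))
      = (2 * s + c) • x₁ := by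
  match_scalars <;> field_simp <;> ring

end BoundarySystem

/-- Proposition 1, boundary-condition system: the coefficients
`σ² = ε² + (√(σ₁⁴ + 4ε⁴) − σ₁²)/2`,
`a = x₀ + (σ²/σ₁²)(x₀ − x₁/α₁)`,
`b = x₁ + (σ²/σ₁²)(x₁ − α₁ x₀)`
satisfy `σ² > 0` and the three boundary identities. -/
theorem tractable_sb_boundary_conditions
    (d : ℕ) (σ1 α1 ε : ℝ) (hσ1 : 0 < σ1) (hα1 : 0 < α1) (hε : 0 < ε)
    (x0 x1 : Fin d → ℝ)
    (σsq : ℝ) (hσsq : σsq = ε^2 + (Real.sqrt (σ1^4 + 4 * ε^4) - σ1^2) / 2)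
    (a : Fin d → ℝ) (ha : a = x0 + (σsq / σ1^2) • (x0 - α1⁻¹ • x1))
    (b : Fin d → ℝ) (hb : b = x1 + (σsq / σ1^2) • (x1 - α1 • x0)) :
    0 < σsq ∧
    σsq * (σsq + σ1^2) / (2 * σsq + σ1^2) = ε^2 ∧
    (2 * σsq + σ1^2)⁻¹ • ((σsq + σ1^2) • a + (σsq * α1⁻¹) • b) = x0 ∧
    (2 * σsq + σ1^2)⁻¹ • ((α1 * σsq) • a + (σsq + σ1^2) • b) = x1 := by
  have hσsq' : σsq = ε ^ 2 + (√((σ1 ^ 2) ^ 2 + 4 * (ε ^ 2) ^ 2) - σ1 ^ 2) / 2 := by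
    rw [hσsq]; ring_nf
  have hpos : 0 < σsq := pos_of_eq_add_sqrt (by positivity) hσsq'
  have hden : 2 * σsq + σ1 ^ 2 ≠ 0 := by positivity
  have hσ1sq : σ1 ^ 2 ≠ 0 := by positivity
  subst ha hb
  refine ⟨hpos, ?_, ?_, ?_⟩
  · rw [div_eq_iff hden]
    exact mul_add_eq_of_eq_add_sqrt _ _ _ hσsq'
  · rw [boundary_smul_add_eq_left hσ1sq hα1.ne', inv_smul_smul₀ hden]
  · rw [boundary_smul_add_eq_right hσ1sq hα1.ne', inv_smul_smul₀ hden]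
end

section
/- (The first-order bridge ODE update recovers the deterministic DDIM sampler in the limit σ_s/σ_1, σ_t/σ_1 → 0, Appendix B.2.) Fix α_t, α_s, α_1 > 0, reals 0 < σ_t < σ_s, and x_s, x_1, X ∈ ℝ^d. For σ_1 > σ_s define σ̄_t = √(σ_1² − σ_t²) and σ̄_s = √(σ_1² − σ_s²). Then, as σ_1 → ∞, the first-order bridge ODE update (α_t σ_t σ̄_t)/(α_s σ_s σ̄_s)·x_s + (α_t/σ_1²)·[ (σ̄_t² − (σ̄_s σ_t σ̄_t)/σ_s)·X + (σ_t² − (σ_s σ_t σ̄_t)/σ̄_s)·(x_1/α_1) ] converges to the DDIM update (α_t σ_t)/(α_s σ_s)·x_s + α_t·(1 − σ_t/σ_s)·X. -/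
/-!
Write `√(σ₁² − c) = σ₁ · √(1 − c/σ₁²)`; the square-root factors `√(1 − c/σ₁²)` tend to `1`. After
dividing by `σ₁²`, each of the three scalar coefficients of the bridge update is a rational
expression in these factors, `1/σ₁²` and the constants, whose value at the limit point
`(1, 1, 0)` is the corresponding DDIM coefficient (the coefficient of `x₁` vanishes).
-/

open Filter Topology Real

lemma tendsto_const_div_sq_atTop (c : ℝ) :
    Tendsto (fun x : ℝ => c / x ^ 2) atTop (𝓝 0) :=
  tendsto_const_nhds.div_atTop (tendsto_pow_atTop two_ne_zero)

lemma tendsto_sqrt_sq_sub_div_atTop (c : ℝ) :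
    Tendsto (fun x : ℝ => √(x ^ 2 - c) / x) atTop (𝓝 1) := by
  have hlim : Tendsto (fun x : ℝ => √(1 - c / x ^ 2)) atTop (𝓝 1) := by
    simpa using ((tendsto_const_nhds (x := (1 : ℝ))).sub
      (tendsto_const_div_sq_atTop c)).sqrt
  refine hlim.congr' ?_
  filter_upwards [eventually_gt_atTop 0] with x hx
  rw [one_sub_div (by positivity), sqrt_div' _ (sq_nonneg x), sqrt_sq hx.le]

lemma tendsto_sqrt_sq_sub_div_sqrt_sq_sub_atTop (a b : ℝ) :
    Tendsto (fun x : ℝ => √(x ^ 2 - a) / √(x ^ 2 - b)) atTop (𝓝 1) := by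
  have hlim := (tendsto_sqrt_sq_sub_div_atTop a).div (tendsto_sqrt_sq_sub_div_atTop b) one_ne_zero
  rw [div_one] at hlim
  refine hlim.congr' ?_
  filter_upwards [eventually_ne_atTop 0] with x hx
  exact div_div_div_cancel_right₀ hx _ _

lemma tendsto_sqrt_sq_sub_mul_sqrt_sq_sub_div_sq_atTop (a b : ℝ) :
    Tendsto (fun x : ℝ => √(x ^ 2 - a) * √(x ^ 2 - b) / x ^ 2) atTop (𝓝 1) := by
  have hlim := (tendsto_sqrt_sq_sub_div_atTop a).mul (tendsto_sqrt_sq_sub_div_atTop b)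
  rw [one_mul] at hlim
  refine hlim.congr fun x => ?_
  rw [div_mul_div_comm, sq]

section BridgeCoefficients

variable (αt αs σt σs : ℝ)

lemma tendsto_bridge_coeff_current :
    Tendsto (fun σ1 : ℝ => αt * σt * √(σ1 ^ 2 - σt ^ 2) / (αs * σs * √(σ1 ^ 2 - σs ^ 2)))
      atTop (𝓝 (αt * σt / (αs * σs))) := by
  have hlim := (tendsto_sqrt_sq_sub_div_sqrt_sq_sub_atTop (σt ^ 2) (σs ^ 2)).const_mul
    (αt * σt / (αs * σs))
  rw [mul_one] at hlim
  refine hlim.congr fun σ1 => ?_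
  rw [div_mul_div_comm]

lemma tendsto_bridge_coeff_data :
    Tendsto (fun σ1 : ℝ => αt / σ1 ^ 2 *
        (σ1 ^ 2 - σt ^ 2 - √(σ1 ^ 2 - σs ^ 2) * σt * √(σ1 ^ 2 - σt ^ 2) / σs))
      atTop (𝓝 (αt * (1 - σt / σs))) := by
  have hlim := ((tendsto_const_nhds (x := (1 : ℝ))).sub (tendsto_const_div_sq_atTop (σt ^ 2))).sub
    ((tendsto_sqrt_sq_sub_mul_sqrt_sq_sub_div_sq_atTop (σs ^ 2) (σt ^ 2)).const_mul (σt / σs))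
    |>.const_mul αt
  rw [sub_zero, mul_one] at hlim
  refine hlim.congr' ?_
  filter_upwards [eventually_ne_atTop 0] with σ1 hσ1
  field_simp

lemma tendsto_bridge_coeff_prior :
    Tendsto (fun σ1 : ℝ => αt / σ1 ^ 2 *
        (σt ^ 2 - σs * σt * √(σ1 ^ 2 - σt ^ 2) / √(σ1 ^ 2 - σs ^ 2)))
      atTop (𝓝 0) := by
  have hlim := ((tendsto_const_div_sq_atTop (σt ^ 2)).sub
    ((tendsto_const_div_sq_atTop (σs * σt)).mul
      (tendsto_sqrt_sq_sub_div_sqrt_sq_sub_atTop (σt ^ 2) (σs ^ 2)))).const_mul αt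
  rw [zero_mul, sub_zero, mul_zero] at hlim
  refine hlim.congr fun σ1 => ?_
  ring

end BridgeCoefficients

theorem bridge_ode_update_tendsto_ddim_general
    (d : ℕ) (αt αs α1 σt σs : ℝ)
    (xs x1 X : Fin d → ℝ) :
    Filter.Tendsto
      (fun σ1 : ℝ =>
        (αt * σt * Real.sqrt (σ1^2 - σt^2) / (αs * σs * Real.sqrt (σ1^2 - σs^2))) • xs
          + (αt / σ1^2) •
            (((σ1^2 - σt^2)
                - Real.sqrt (σ1^2 - σs^2) * σt * Real.sqrt (σ1^2 - σt^2) / σs) • X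
              + (σt^2
                  - σs * σt * Real.sqrt (σ1^2 - σt^2) / Real.sqrt (σ1^2 - σs^2)) •
                (α1⁻¹ • x1)))
      Filter.atTop
      (nhds ((αt * σt / (αs * σs)) • xs + (αt * (1 - σt / σs)) • X)) := by
  have hlim := ((tendsto_bridge_coeff_current αt αs σt σs).smul_const xs).add
    (((tendsto_bridge_coeff_data αt σt σs).smul_const X).add
      ((tendsto_bridge_coeff_prior αt σt σs).smul_const (α1⁻¹ • x1)))
  rw [zero_smul, add_zero] at hlim
  refine hlim.congr fun σ1 => ?_
  simp only [smul_add, mul_smul]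

/-- The first-order bridge ODE update recovers the deterministic DDIM sampler in the limit
`σ_s/σ₁, σ_t/σ₁ → 0` (Appendix B.2): with `σ̄_t = √(σ₁² − σ_t²)` and `σ̄_s = √(σ₁² − σ_s²)`,
as `σ₁ → ∞` the first-order bridge ODE update
`(α_t σ_t σ̄_t)/(α_s σ_s σ̄_s) x_s
  + (α_t/σ₁²)[(σ̄_t² − σ̄_s σ_t σ̄_t/σ_s) X + (σ_t² − σ_s σ_t σ̄_t/σ̄_s)(x₁/α₁)]`
converges to the DDIM update `(α_t σ_t)/(α_s σ_s) x_s + α_t (1 − σ_t/σ_s) X`. -/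
theorem bridge_ode_update_tendsto_ddim
    (d : ℕ) (αt αs α1 σt σs : ℝ)
    (hαt : 0 < αt) (hαs : 0 < αs) (hα1 : 0 < α1)
    (hσt : 0 < σt) (hσts : σt < σs)
    (xs x1 X : Fin d → ℝ) :
    Filter.Tendsto
      (fun σ1 : ℝ =>
        (αt * σt * Real.sqrt (σ1^2 - σt^2) / (αs * σs * Real.sqrt (σ1^2 - σs^2))) • xs
          + (αt / σ1^2) •
            (((σ1^2 - σt^2)
                - Real.sqrt (σ1^2 - σs^2) * σt * Real.sqrt (σ1^2 - σt^2) / σs) • X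
              + (σt^2
                  - σs * σt * Real.sqrt (σ1^2 - σt^2) / Real.sqrt (σ1^2 - σs^2)) •
                (α1⁻¹ • x1)))
      Filter.atTop
      (nhds ((αt * σt / (αs * σs)) • xs + (αt * (1 - σt / σs)) • X)) :=
  bridge_ode_update_tendsto_ddim_general d αt αs α1 σt σs xs x1 X
end
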